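/- arXiv:1909.04482 — 2 statements merged into one kernel-verified Lean document; each statement's English description precedes it below -/
import Mathlib

section
/- For any connected graph G with n vertices and any nonempty initial blue set S ⊆ V(G), the expected propagation time of probabilistic zero forcing started from S satisfies ept(G, S) ≤ n - |S|. -/
open Finset

/-- Probability that white vertex `v` is forced blue in one step of probabilistic
zero forcing from blue set `B`: each blue neighbor `u` of `v` independently forces `v`
with probability `|N[u] ∩ B| / deg u`. -/
noncomputable def forceProb {V : Type*} [Fintype V] [DecidableEq V]
    (G : SimpleGraph V) [DecidableRel G.Adj] (B : Finset V) (v : V) : ℝ :=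
  1 - ∏ u ∈ B.filter (fun u => G.Adj u v),
      (1 - (((G.neighborFinset u ∩ B).card + 1 : ℝ) / (G.degree u)))

/-- Probability that the set of newly forced vertices in one step of probabilistic zero
forcing from blue set `B` is exactly `T` (white vertices turn blue independently). -/
noncomputable def stepMass {V : Type*} [Fintype V] [DecidableEq V]
    (G : SimpleGraph V) [DecidableRel G.Adj] (B T : Finset V) : ℝ :=
  if T ⊆ Bᶜ then
    ∏ v ∈ Bᶜ, (if v ∈ T then forceProb G B v else 1 - forceProb G B v)
  else 0

/-- `probAllBlue G t B` is the probability that, starting from blue set `B`, all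
vertices are blue after `t` steps of probabilistic zero forcing. -/
noncomputable def probAllBlue {V : Type*} [Fintype V] [DecidableEq V]
    (G : SimpleGraph V) [DecidableRel G.Adj] : ℕ → Finset V → ℝ
  | 0, B => if B = Finset.univ then 1 else 0
  | t + 1, B => ∑ T ∈ Bᶜ.powerset, stepMass G B T * probAllBlue G t (B ∪ T)

/-- Expected propagation time of probabilistic zero forcing from initial blue set `S`:
`E[τ] = ∑_{t ≥ 0} P(τ > t) = ∑_{t ≥ 0} (1 - P^{(t)}(G,S))`. -/
noncomputable def ept {V : Type*} [Fintype V] [DecidableEq V]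
    (G : SimpleGraph V) [DecidableRel G.Adj] (S : Finset V) : ℝ :=
  ∑' t : ℕ, (1 - probAllBlue G t S)

section Aux

variable {V : Type*} [Fintype V] [DecidableEq V]
  (G : SimpleGraph V) [DecidableRel G.Adj]

lemma forceProb_factor_bounds {B : Finset V} {u v : V} (hv : v ∉ B) (hu : G.Adj u v) :
    ((G.neighborFinset u ∩ B).card + 1 : ℝ) / (G.degree u) ≤ 1 ∧
    0 < ((G.neighborFinset u ∩ B).card + 1 : ℝ) / (G.degree u) := by
  have hd : 0 < G.degree u := by
    rw [G.degree_pos_iff_exists_adj u]; exact ⟨v, hu⟩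
  have hlt : (G.neighborFinset u ∩ B).card < G.degree u := by
    apply Finset.card_lt_card
    rw [Finset.ssubset_iff_of_subset (Finset.inter_subset_left)]
    exact ⟨v, by rwa [SimpleGraph.mem_neighborFinset], by simp [hv]⟩
  constructor
  · rw [div_le_one (by exact_mod_cast hd)]
    exact_mod_cast hlt
  · positivity

lemma forceProb_nonneg {B : Finset V} {v : V} (hv : v ∉ B) :
    0 ≤ forceProb G B v := by
  unfold forceProb
  have : ∏ u ∈ B.filter (fun u => G.Adj u v),
      (1 - (((G.neighborFinset u ∩ B).card + 1 : ℝ) / (G.degree u))) ≤ 1 := by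
    apply Finset.prod_le_one
    · intro u hu
      rw [Finset.mem_filter] at hu
      linarith [(forceProb_factor_bounds G hv hu.2).1]
    · intro u hu
      rw [Finset.mem_filter] at hu
      linarith [(forceProb_factor_bounds G hv hu.2).2]
  linarith

lemma forceProb_le_one {B : Finset V} {v : V} (hv : v ∉ B) :
    forceProb G B v ≤ 1 := by
  unfold forceProb
  have : (0:ℝ) ≤ ∏ u ∈ B.filter (fun u => G.Adj u v),
      (1 - (((G.neighborFinset u ∩ B).card + 1 : ℝ) / (G.degree u))) := by
    apply Finset.prod_nonneg
    intro u hu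
    rw [Finset.mem_filter] at hu
    linarith [(forceProb_factor_bounds G hv hu.2).1]
  linarith

lemma sum_powerset_prod_ite (s : Finset V) (a b : V → ℝ) :
    ∑ T ∈ s.powerset, (∏ w ∈ s, if w ∈ T then a w else b w) = ∏ w ∈ s, (a w + b w) := by
  rw [Finset.prod_add]
  refine Finset.sum_congr rfl fun T hT => ?_
  rw [Finset.mem_powerset] at hT
  rw [Finset.prod_ite]
  congr 1
  · apply Finset.prod_congr _ (fun _ _ => rfl)
    ext x; simp only [Finset.mem_filter]
    exact ⟨fun h => h.2, fun h => ⟨hT h, h⟩⟩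
  · apply Finset.prod_congr _ (fun _ _ => rfl)
    ext x; simp [Finset.mem_filter, Finset.mem_sdiff, and_comm]

lemma stepMass_nonneg (B T : Finset V) : 0 ≤ stepMass G B T := by
  unfold stepMass
  split
  · rename_i hT
    apply Finset.prod_nonneg
    intro v hv
    rw [Finset.mem_compl] at hv
    split
    · exact forceProb_nonneg G hv
    · linarith [forceProb_le_one G hv]
  · exact le_refl 0

lemma sum_stepMass (B : Finset V) : ∑ T ∈ Bᶜ.powerset, stepMass G B T = 1 := by
  have : ∀ T ∈ Bᶜ.powerset, stepMass G B T
      = ∏ v ∈ Bᶜ, (if v ∈ T then forceProb G B v else 1 - forceProb G B v) := by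
    intro T hT
    rw [Finset.mem_powerset] at hT
    unfold stepMass
    rw [if_pos hT]
  rw [Finset.sum_congr rfl this, sum_powerset_prod_ite]
  simp

lemma sum_stepMass_mul_card (B : Finset V) :
    ∑ T ∈ Bᶜ.powerset, stepMass G B T * T.card = ∑ v ∈ Bᶜ, forceProb G B v := by
  have step1 : ∀ T ∈ Bᶜ.powerset, stepMass G B T * T.card
      = ∑ v ∈ Bᶜ, ∏ w ∈ Bᶜ, (if w ∈ T then forceProb G B w
          else if w = v then 0 else 1 - forceProb G B w) := by
    intro T hT
    rw [Finset.mem_powerset] at hT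
    have hcard : (T.card : ℝ) = ∑ v ∈ Bᶜ, (if v ∈ T then (1:ℝ) else 0) := by
      rw [Finset.sum_ite_mem, Finset.sum_const]
      rw [Finset.inter_eq_right.mpr hT]
      simp
    unfold stepMass
    rw [if_pos hT, hcard, Finset.mul_sum]
    refine Finset.sum_congr rfl fun v hv => ?_
    by_cases hvT : v ∈ T
    · rw [if_pos hvT, mul_one]
      refine Finset.prod_congr rfl fun w hw => ?_
      by_cases hwT : w ∈ T
      · simp [hwT]
      · have : w ≠ v := fun h => hwT (h ▸ hvT)
        simp [hwT, this]
    · rw [if_neg hvT, mul_zero]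
      symm
      apply Finset.prod_eq_zero hv
      simp [hvT]
  rw [Finset.sum_congr rfl step1, Finset.sum_comm]
  refine Finset.sum_congr rfl fun v hv => ?_
  rw [sum_powerset_prod_ite]
  rw [Finset.prod_eq_single v]
  · simp
  · intro w _ hwv; simp [hwv]
  · intro h; exact absurd hv h

lemma probAllBlue_nonneg (t : ℕ) (B : Finset V) : 0 ≤ probAllBlue G t B := by
  induction t generalizing B with
  | zero => unfold probAllBlue; split <;> norm_num
  | succ t ih =>
    show 0 ≤ ∑ T ∈ Bᶜ.powerset, stepMass G B T * probAllBlue G t (B ∪ T)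
    exact Finset.sum_nonneg fun T _ => mul_nonneg (stepMass_nonneg G B T) (ih _)

lemma probAllBlue_le_one (t : ℕ) (B : Finset V) : probAllBlue G t B ≤ 1 := by
  induction t generalizing B with
  | zero => unfold probAllBlue; split <;> norm_num
  | succ t ih =>
    show ∑ T ∈ Bᶜ.powerset, stepMass G B T * probAllBlue G t (B ∪ T) ≤ 1
    calc ∑ T ∈ Bᶜ.powerset, stepMass G B T * probAllBlue G t (B ∪ T)
        ≤ ∑ T ∈ Bᶜ.powerset, stepMass G B T := by
          refine Finset.sum_le_sum fun T _ => ?_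
          nth_rewrite 2 [← mul_one (stepMass G B T)]
          exact mul_le_mul_of_nonneg_left (ih _) (stepMass_nonneg G B T)
      _ = 1 := sum_stepMass G B

/-- Key combinatorial lemma: if `B` is a nonempty proper blue set in a connected graph,
the expected number of newly forced vertices is at least `1`. -/
lemma one_le_sum_forceProb (hG : G.Connected) {B : Finset V} (hB : B.Nonempty)
    (hBu : B ≠ Finset.univ) : 1 ≤ ∑ v ∈ Bᶜ, forceProb G B v := by
  obtain ⟨x, hx⟩ := hB
  obtain ⟨y, hy⟩ : Bᶜ.Nonempty := by
    rw [← Finset.card_pos, Finset.card_compl]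
    have := Finset.card_lt_card (lt_of_le_of_ne (Finset.subset_univ B)
      (fun h => hBu h))
    rw [Finset.card_univ] at this
    omega
  rw [Finset.mem_compl] at hy
  obtain ⟨d, _, hd1, hd2⟩ := ((hG x y).some).exists_boundary_dart (↑B : Set V)
    (by exact_mod_cast hx) (by exact_mod_cast hy)
  set u := d.toProd.1 with hu
  set v0 := d.toProd.2 with hv0
  have huB : u ∈ B := by exact_mod_cast hd1
  have hv0B : v0 ∉ B := by exact_mod_cast hd2
  have hadj : G.Adj u v0 := d.adj
  set W : Finset V := G.neighborFinset u ∩ Bᶜ with hW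
  have hWsub : W ⊆ Bᶜ := Finset.inter_subset_right
  have hv0W : v0 ∈ W := by
    rw [hW, Finset.mem_inter, SimpleGraph.mem_neighborFinset, Finset.mem_compl]
    exact ⟨hadj, hv0B⟩
  set b : ℕ := (G.neighborFinset u ∩ B).card with hb
  set w : ℕ := W.card with hwdef
  have hwpos : 0 < w := Finset.card_pos.mpr ⟨v0, hv0W⟩
  have hdeg : G.degree u = b + w := by
    rw [hb, hwdef, hW, ← SimpleGraph.card_neighborFinset_eq_degree]
    rw [← Finset.filter_mem_eq_inter, ← Finset.filter_mem_eq_inter]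
    have := Finset.card_filter_add_card_filter_not
      (s := G.neighborFinset u) (p := fun x => x ∈ B)
    rw [← this]
    congr 1
    apply Finset.card_bij (fun a _ => a)
    · intro a ha; simp only [Finset.mem_filter] at *
      exact ⟨ha.1, by simpa using ha.2⟩
    · intro a _ a' _ h; exact h
    · intro a ha; simp only [Finset.mem_filter, Finset.mem_compl] at *
      exact ⟨a, ⟨ha.1, ha.2⟩, rfl⟩
  -- each vertex of W is forced with probability at least (b+1)/(b+w)
  have hsingle : ∀ v ∈ W, ((b:ℝ) + 1) / ((b:ℝ) + w) ≤ forceProb G B v := by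
    intro v hv
    rw [hW, Finset.mem_inter, SimpleGraph.mem_neighborFinset, Finset.mem_compl] at hv
    obtain ⟨hadjv, hvB⟩ := hv
    unfold forceProb
    have huf : u ∈ B.filter (fun u => G.Adj u v) := by
      rw [Finset.mem_filter]; exact ⟨huB, hadjv⟩
    have hprod : ∏ u' ∈ B.filter (fun u' => G.Adj u' v),
        (1 - (((G.neighborFinset u' ∩ B).card + 1 : ℝ) / (G.degree u')))
        ≤ 1 - (((G.neighborFinset u ∩ B).card + 1 : ℝ) / (G.degree u)) := by
      rw [← Finset.mul_prod_erase _ _ huf]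
      have h1 : ∏ u' ∈ (B.filter (fun u' => G.Adj u' v)).erase u,
          (1 - (((G.neighborFinset u' ∩ B).card + 1 : ℝ) / (G.degree u'))) ≤ 1 := by
        apply Finset.prod_le_one
        · intro a ha
          have := (Finset.mem_filter.mp (Finset.mem_of_mem_erase ha)).2
          linarith [(forceProb_factor_bounds G hvB this).1]
        · intro a ha
          have := (Finset.mem_filter.mp (Finset.mem_of_mem_erase ha)).2
          linarith [(forceProb_factor_bounds G hvB this).2]
      have h2 : (0:ℝ) ≤ 1 - (((G.neighborFinset u ∩ B).card + 1 : ℝ) / (G.degree u)) := by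
        linarith [(forceProb_factor_bounds G hvB hadjv).1]
      nth_rewrite 2 [← mul_one (1 - (((G.neighborFinset u ∩ B).card + 1 : ℝ) / (G.degree u)))]
      exact mul_le_mul_of_nonneg_left h1 h2
    have hdegr : ((G.degree u : ℝ)) = (b:ℝ) + w := by exact_mod_cast hdeg
    rw [← hb] at hprod
    rw [hdegr] at hprod
    linarith
  have hWsum : ((w:ℝ)) * (((b:ℝ) + 1) / ((b:ℝ) + w)) ≤ ∑ v ∈ W, forceProb G B v := by
    calc ((w:ℝ)) * (((b:ℝ) + 1) / ((b:ℝ) + w))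
        = ∑ _v ∈ W, ((b:ℝ) + 1) / ((b:ℝ) + w) := by
          rw [Finset.sum_const, nsmul_eq_mul, hwdef]
      _ ≤ ∑ v ∈ W, forceProb G B v := Finset.sum_le_sum hsingle
  have harith : (1:ℝ) ≤ ((w:ℝ)) * (((b:ℝ) + 1) / ((b:ℝ) + w)) := by
    have hwr : (1:ℝ) ≤ (w:ℝ) := by exact_mod_cast hwpos
    have hbd : (0:ℝ) < (b:ℝ) + w := by positivity
    rw [mul_div_assoc', le_div_iff₀ hbd, one_mul]
    nlinarith
  have hfull : ∑ v ∈ W, forceProb G B v ≤ ∑ v ∈ Bᶜ, forceProb G B v := by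
    apply Finset.sum_le_sum_of_subset_of_nonneg hWsub
    intro v hv _
    exact forceProb_nonneg G (Finset.mem_compl.mp hv)
  linarith

lemma key_bound (hG : G.Connected) :
    ∀ (t : ℕ) (B : Finset V), B.Nonempty →
      ∑ s ∈ Finset.range t, (1 - probAllBlue G s B)
        ≤ (Fintype.card V : ℝ) - B.card := by
  intro t
  induction t with
  | zero =>
    intro B _
    simp only [Finset.range_zero, Finset.sum_empty, sub_nonneg]
    exact_mod_cast (Finset.card_le_univ B).trans_eq Finset.card_univ
  | succ t ih =>
    intro B hB
    rw [Finset.sum_range_succ']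
    have hmass := sum_stepMass G B
    have h1 : ∀ s : ℕ, 1 - probAllBlue G (s+1) B
        = ∑ T ∈ Bᶜ.powerset, stepMass G B T * (1 - probAllBlue G s (B ∪ T)) := by
      intro s
      have : ∑ T ∈ Bᶜ.powerset, stepMass G B T * (1 - probAllBlue G s (B ∪ T))
          = ∑ T ∈ Bᶜ.powerset, (stepMass G B T - stepMass G B T * probAllBlue G s (B ∪ T)) := by
        refine Finset.sum_congr rfl fun T _ => ?_; ring
      rw [this, Finset.sum_sub_distrib, hmass]
      rfl
    have h2 : ∑ s ∈ Finset.range t, (1 - probAllBlue G (s+1) B)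
        = ∑ T ∈ Bᶜ.powerset, stepMass G B T
            * ∑ s ∈ Finset.range t, (1 - probAllBlue G s (B ∪ T)) := by
      rw [Finset.sum_congr rfl (fun s _ => h1 s), Finset.sum_comm]
      exact Finset.sum_congr rfl fun T _ => (Finset.mul_sum _ _ _).symm
    have h3 : ∑ T ∈ Bᶜ.powerset, stepMass G B T
            * ∑ s ∈ Finset.range t, (1 - probAllBlue G s (B ∪ T))
        ≤ ∑ T ∈ Bᶜ.powerset, stepMass G B T * ((Fintype.card V : ℝ) - (B ∪ T).card) := by
      refine Finset.sum_le_sum fun T _ => ?_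
      exact mul_le_mul_of_nonneg_left (ih (B ∪ T) (hB.mono Finset.subset_union_left))
        (stepMass_nonneg G B T)
    have h4 : ∑ T ∈ Bᶜ.powerset, stepMass G B T * ((Fintype.card V : ℝ) - (B ∪ T).card)
        = ((Fintype.card V : ℝ) - B.card) - ∑ v ∈ Bᶜ, forceProb G B v := by
      have : ∀ T ∈ Bᶜ.powerset, stepMass G B T * ((Fintype.card V : ℝ) - (B ∪ T).card)
          = stepMass G B T * ((Fintype.card V : ℝ) - B.card) - stepMass G B T * T.card := by
        intro T hT
        rw [Finset.mem_powerset] at hT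
        have hdisj : Disjoint B T := by
          rw [Finset.disjoint_left]
          intro a haB haT
          exact (Finset.mem_compl.mp (hT haT)) haB
        rw [Finset.card_union_of_disjoint hdisj]
        push_cast
        ring
      rw [Finset.sum_congr rfl this, Finset.sum_sub_distrib, ← Finset.sum_mul, hmass, one_mul,
        sum_stepMass_mul_card]
    have hchain : ∑ s ∈ Finset.range t, (1 - probAllBlue G (s+1) B)
        ≤ ((Fintype.card V : ℝ) - B.card) - ∑ v ∈ Bᶜ, forceProb G B v := by
      rw [h2]; exact h3.trans (le_of_eq h4)
    by_cases hBu : B = Finset.univ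
    · have hP0 : probAllBlue G 0 B = 1 := by unfold probAllBlue; rw [if_pos hBu]
      have hfp : ∑ v ∈ Bᶜ, forceProb G B v = 0 := by
        rw [hBu, Finset.compl_univ, Finset.sum_empty]
      linarith
    · have hP0 : probAllBlue G 0 B = 0 := by unfold probAllBlue; rw [if_neg hBu]
      have hfp := one_le_sum_forceProb G hG hB hBu
      linarith
end Aux

/-- For any connected graph `G` on `n` vertices and any nonempty initial blue set `S`,
the expected propagation time satisfies `ept(G,S) ≤ n - |S|`. -/
theorem ept_le_card_sub {V : Type*} [Fintype V] [DecidableEq V]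
    (G : SimpleGraph V) [DecidableRel G.Adj] (hG : G.Connected)
    (S : Finset V) (hS : S.Nonempty) :
    ept G S ≤ (Fintype.card V : ℝ) - S.card := by
  unfold ept
  apply Real.tsum_le_of_sum_range_le
  · intro t
    linarith [probAllBlue_le_one G t S]
  · intro n
    exact key_bound G hG n S hS
end

section
/- For any connected graph G with n vertices, the probabilistic zero forcing throttling number satisfies th(G) ≥ log₂ log₂ (2n), where th(G) = min over nonempty S ⊆ V(G) of (|S| + ept(G, S)). -/
open Finset

/-!
The potential `Φ(B) = log₂ log₂ (2|B|)` of the blue set rises by at most one per step in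
expectation. A blue vertex `u` forces each white neighbour with probability
`(|N(u) ∩ B| + 1) / deg u`, so it forces at most `|B|` vertices in expectation and the expected
value of `2|B|` is at most squared; Jensen's inequality for the concave `log₂`, applied twice,
turns this squaring into adding one. Since `Φ ≥ 0`, after `t` steps
`Φ(V) · P(all blue) ≤ Φ(S) + ∑_{s<t} P(not all blue after s steps)`, and letting `t → ∞` gives
`ept(G, S) ≥ Φ(V) - Φ(S)`; finally `Φ(S) ≤ |S|`. Connectivity enters only through the limit:
it makes `P(not all blue after t steps)` decay geometrically, so the series defining `ept`
converges (otherwise its `tsum` would be the junk value `0`).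
-/

open Real

theorem one_sub_prod_one_sub_le_sum {ι : Type*} (s : Finset ι) (p : ι → ℝ)
    (h₀ : ∀ i ∈ s, 0 ≤ p i) (h₁ : ∀ i ∈ s, p i ≤ 1) :
    1 - ∏ i ∈ s, (1 - p i) ≤ ∑ i ∈ s, p i := by
  classical
  induction s using Finset.induction_on with
  | empty => simp
  | insert a s ha ih =>
    rw [prod_insert ha, sum_insert ha]
    have hprod : ∏ i ∈ s, (1 - p i) ≤ 1 :=
      prod_le_one (fun i hi => by linarith [h₁ i (mem_insert_of_mem hi)])
        (fun i hi => by linarith [h₀ i (mem_insert_of_mem hi)])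
    have := ih (fun i hi => h₀ i (mem_insert_of_mem hi)) (fun i hi => h₁ i (mem_insert_of_mem hi))
    nlinarith [h₀ a (mem_insert_self a s)]

theorem sum_powerset_bernoulli {ι : Type*} [DecidableEq ι] (W : Finset ι) (q : ι → ℝ) :
    ∑ T ∈ W.powerset, (∏ v ∈ T, q v) * ∏ v ∈ W \ T, (1 - q v) = 1 := by
  rw [← prod_add]; simp

theorem sum_powerset_bernoulli_mul_card {ι : Type*} [DecidableEq ι] (W : Finset ι)
    (q : ι → ℝ) :
    ∑ T ∈ W.powerset, (∏ v ∈ T, q v) * (∏ v ∈ W \ T, (1 - q v)) * #T = ∑ v ∈ W, q v := by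
  induction W using Finset.induction_on with
  | empty => simp
  | insert a W ha ih =>
    have haT : ∀ T ∈ W.powerset, a ∉ T := fun T hT h => ha (mem_powerset.1 hT h)
    have h₁ : ∀ T ∈ W.powerset,
        (∏ v ∈ T, q v) * (∏ v ∈ insert a W \ T, (1 - q v)) * #T
          = (1 - q a) * ((∏ v ∈ T, q v) * (∏ v ∈ W \ T, (1 - q v)) * #T) := by
      intro T hT
      rw [insert_sdiff_of_notMem _ (haT T hT), prod_insert fun h => ha (mem_sdiff.1 h).1]
      ring
    have h₂ : ∀ T ∈ W.powerset,
        (∏ v ∈ insert a T, q v) * (∏ v ∈ insert a W \ insert a T, (1 - q v)) * #(insert a T)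
          = q a * ((∏ v ∈ T, q v) * (∏ v ∈ W \ T, (1 - q v)) * #T
            + (∏ v ∈ T, q v) * ∏ v ∈ W \ T, (1 - q v)) := by
      intro T hT
      rw [prod_insert (haT T hT), card_insert_of_notMem (haT T hT), insert_sdiff_insert,
        sdiff_insert_of_notMem ha]
      push_cast
      ring
    rw [sum_powerset_insert ha, sum_insert ha, sum_congr rfl h₁, sum_congr rfl h₂, ← mul_sum,
      ← mul_sum, sum_add_distrib, ih, sum_powerset_bernoulli]
    ring

theorem sum_mul_logb_le_logb_sum {ι : Type*} (s : Finset ι) (w x : ι → ℝ)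
    (hw₀ : ∀ i ∈ s, 0 ≤ w i) (hw₁ : ∑ i ∈ s, w i = 1) (hx : ∀ i ∈ s, 0 < x i) :
    ∑ i ∈ s, w i * logb 2 (x i) ≤ logb 2 (∑ i ∈ s, w i * x i) := by
  have h := strictConcaveOn_log_Ioi.concaveOn.le_map_sum hw₀ hw₁ hx
  simp only [smul_eq_mul] at h
  simp only [logb, ← mul_div_assoc, ← sum_div]
  exact div_le_div_of_nonneg_right h (log_pos one_lt_two).le

theorem summable_of_add_le_mul {q : ℕ → ℝ} {ρ : ℝ} {N : ℕ} (hN : 0 < N) (hq : ∀ t, 0 ≤ q t)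
    (hρ₀ : 0 ≤ ρ) (hρ₁ : ρ < 1) (h : ∀ t, q (t + N) ≤ ρ * q t) : Summable q := by
  have : NeZero N := ⟨hN.ne'⟩
  have hblock : ∀ j r, q (j * N + r) ≤ ρ ^ j * q r := by
    intro j r
    induction j with
    | zero => simp
    | succ j ih =>
      calc q ((j + 1) * N + r) = q (j * N + r + N) := by ring_nf
        _ ≤ ρ * q (j * N + r) := h _
        _ ≤ ρ * (ρ ^ j * q r) := mul_le_mul_of_nonneg_left ih hρ₀
        _ = ρ ^ (j + 1) * q r := by ring
  rw [← (Nat.divModEquiv N).symm.summable_iff]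
  exact ((summable_geometric_of_lt_one hρ₀ hρ₁).mul_of_nonneg
    (Summable.of_finite (f := fun r : Fin N => q r)) (fun j => pow_nonneg hρ₀ j)
    (fun r => hq r)).of_nonneg_of_le (fun _ => hq _) (fun p => hblock p.1 p.2)

theorem SimpleGraph.Connected.exists_adj_mem_notMem {V : Type*} {G : SimpleGraph V}
    (hG : G.Connected) {s : Set V} {u w : V} (hu : u ∈ s) (hw : w ∉ s) :
    ∃ x ∈ s, ∃ y ∉ s, G.Adj x y := by
  obtain ⟨d, -, hd₁, hd₂⟩ := (hG u w).some.exists_boundary_dart s hu hw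
  exact ⟨d.fst, hd₁, d.snd, hd₂, d.adj⟩

noncomputable def logLog (k : ℕ) : ℝ := logb 2 (logb 2 (2 * k))

theorem one_le_logb_two {y : ℝ} (hy : 2 ≤ y) : 1 ≤ logb 2 y :=
  (logb_self_eq_one one_lt_two).symm.trans_le (logb_le_logb_of_le one_lt_two two_pos hy)

theorem logLog_nonneg (k : ℕ) : 0 ≤ logLog k := by
  rcases Nat.eq_zero_or_pos k with rfl | hk
  · simp [logLog]
  · exact logb_nonneg one_lt_two (one_le_logb_two (by
      have : (1 : ℝ) ≤ k := by exact_mod_cast hk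
      linarith))

theorem logLog_le_self {k : ℕ} (hk : 1 ≤ k) : logLog k ≤ k := by
  have hk' : (1 : ℝ) ≤ k := by exact_mod_cast hk
  have h2k : (2 : ℝ) * k ≤ 2 ^ (2 ^ k : ℕ) := by
    have : 2 * k ≤ 2 ^ 2 ^ k :=
      calc 2 * k ≤ 2 ^ (k + 1) := by
            rw [pow_succ']; exact Nat.mul_le_mul_left 2 Nat.lt_two_pow_self.le
        _ ≤ 2 ^ 2 ^ k := Nat.pow_le_pow_right two_pos Nat.lt_two_pow_self
    exact_mod_cast this
  have hlog : logb 2 (2 * k) ≤ 2 ^ k := by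
    calc logb 2 (2 * k) ≤ logb 2 (2 ^ (2 ^ k : ℕ)) :=
          logb_le_logb_of_le one_lt_two (by positivity) h2k
      _ = 2 ^ k := by simp [logb_pow]
  calc logLog k ≤ logb 2 (2 ^ k) :=
        logb_le_logb_of_le one_lt_two (one_pos.trans_le (one_le_logb_two (by linarith))) hlog
    _ = k := by simp [logb_pow]

namespace ProbZeroForcing

variable {V : Type*} [Fintype V] [DecidableEq V] {G : SimpleGraph V} [DecidableRel G.Adj]
  {B T : Finset V} {u v : V}

variable (G) in
noncomputable def forcerProb (B : Finset V) (u : V) : ℝ :=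
  ((G.neighborFinset u ∩ B).card + 1 : ℝ) / G.degree u

theorem forceProb_eq :
    forceProb G B v = 1 - ∏ u ∈ B with G.Adj u v, (1 - forcerProb G B u) := rfl

theorem forcerProb_nonneg : 0 ≤ forcerProb G B u := by
  unfold forcerProb; positivity

theorem forcerProb_pos (h : G.Adj u v) : 0 < forcerProb G B u := by
  unfold forcerProb
  have : 0 < G.degree u := G.degree_pos_iff_exists_adj u |>.2 ⟨v, h⟩
  positivity

theorem forcerProb_le_one (h : G.Adj u v) (hv : v ∉ B) : forcerProb G B u ≤ 1 := by
  rw [forcerProb, div_le_one (by exact_mod_cast G.degree_pos_iff_exists_adj u |>.2 ⟨v, h⟩),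
    ← G.card_neighborFinset_eq_degree]
  have hsub : insert v (G.neighborFinset u ∩ B) ⊆ G.neighborFinset u :=
    insert_subset ((G.mem_neighborFinset u v).2 h) inter_subset_left
  have := card_le_card hsub
  rw [card_insert_of_notMem fun hv' => hv (mem_inter.1 hv').2] at this
  exact_mod_cast this

theorem forcerProb_mul_degree_le (hu : u ∈ B) : forcerProb G B u * G.degree u ≤ #B := by
  rcases Nat.eq_zero_or_pos (G.degree u) with h | h
  · simp [h]
  rw [forcerProb, div_mul_cancel₀ _ (by exact_mod_cast h.ne')]
  have hsub : G.neighborFinset u ∩ B ⊆ B.erase u := fun x hx =>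
    mem_erase.2 ⟨fun hxu => G.irrefl (hxu ▸ (G.mem_neighborFinset u x).1 (mem_inter.1 hx).1),
      (mem_inter.1 hx).2⟩
  have := card_le_card hsub
  rw [card_erase_of_mem hu] at this
  have : 0 < #B := card_pos.2 ⟨u, hu⟩
  exact_mod_cast (by omega : #(G.neighborFinset u ∩ B) + 1 ≤ #B)

theorem prod_one_sub_forcerProb_mem_Icc (hv : v ∉ B) :
    ∏ u ∈ B with G.Adj u v, (1 - forcerProb G B u) ∈ Set.Icc 0 1 := by
  have h₀ : ∀ u ∈ {u ∈ B | G.Adj u v}, 0 ≤ 1 - forcerProb G B u := fun u hu =>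
    sub_nonneg.2 (forcerProb_le_one (mem_filter.1 hu).2 hv)
  exact ⟨prod_nonneg h₀, prod_le_one h₀ fun u _ => sub_le_self 1 forcerProb_nonneg⟩

theorem forceProb_nonneg (hv : v ∉ B) : 0 ≤ forceProb G B v := by
  rw [forceProb_eq]; linarith [(prod_one_sub_forcerProb_mem_Icc (G := G) hv).2]

theorem forceProb_le_one (hv : v ∉ B) : forceProb G B v ≤ 1 := by
  rw [forceProb_eq]; linarith [(prod_one_sub_forcerProb_mem_Icc (G := G) hv).1]

theorem forceProb_pos (hu : u ∈ B) (hv : v ∉ B) (h : G.Adj u v) : 0 < forceProb G B v := by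
  have hmem : u ∈ {u ∈ B | G.Adj u v} := mem_filter.2 ⟨hu, h⟩
  have hrest : ∏ w ∈ {u ∈ B | G.Adj u v}.erase u, (1 - forcerProb G B w) ≤ 1 :=
    prod_le_one (fun w hw => sub_nonneg.2 <|
        forcerProb_le_one (mem_filter.1 (mem_of_mem_erase hw)).2 hv)
      fun w _ => sub_le_self 1 forcerProb_nonneg
  rw [forceProb_eq, ← mul_prod_erase _ _ hmem]
  nlinarith [forcerProb_pos (B := B) h, forcerProb_le_one (B := B) h hv]

theorem forceProb_le_sum_forcerProb (hv : v ∉ B) :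
    forceProb G B v ≤ ∑ u ∈ B with G.Adj u v, forcerProb G B u :=
  one_sub_prod_one_sub_le_sum _ _ (fun _ _ => forcerProb_nonneg)
    fun _ hu => forcerProb_le_one (mem_filter.1 hu).2 hv

theorem sum_forceProb_le_sq (B : Finset V) : ∑ v ∈ Bᶜ, forceProb G B v ≤ (#B : ℝ) ^ 2 := by
  calc ∑ v ∈ Bᶜ, forceProb G B v
      ≤ ∑ v ∈ Bᶜ, ∑ u ∈ B with G.Adj u v, forcerProb G B u :=
        sum_le_sum fun v hv => forceProb_le_sum_forcerProb (mem_compl.1 hv)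
    _ = ∑ u ∈ B, ∑ v ∈ Bᶜ with G.Adj u v, forcerProb G B u :=
        sum_comm' fun v u => by simp only [mem_filter]; tauto
    _ = ∑ u ∈ B, forcerProb G B u * #{v ∈ Bᶜ | G.Adj u v} := by simp [mul_comm]
    _ ≤ ∑ u ∈ B, forcerProb G B u * G.degree u := by
        gcongr with u
        · exact forcerProb_nonneg
        · rw [← G.card_neighborFinset_eq_degree]
          exact card_le_card fun v hv => (G.mem_neighborFinset u v).2 (mem_filter.1 hv).2
    _ ≤ ∑ _u ∈ B, (#B : ℝ) := sum_le_sum fun u hu => forcerProb_mul_degree_le hu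
    _ = (#B : ℝ) ^ 2 := by simp [sq]

theorem stepMass_eq (hT : T ⊆ Bᶜ) :
    stepMass G B T = (∏ v ∈ T, forceProb G B v) * ∏ v ∈ Bᶜ \ T, (1 - forceProb G B v) := by
  rw [stepMass, if_pos hT, ← prod_sdiff hT, mul_comm]
  congr 1
  · exact prod_congr rfl fun v hv => if_pos hv
  · exact prod_congr rfl fun v hv => if_neg (mem_sdiff.1 hv).2

theorem stepMass_nonneg (B T : Finset V) : 0 ≤ stepMass G B T := by
  unfold stepMass
  split_ifs
  · refine prod_nonneg fun v hv => ?_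
    have hv := mem_compl.1 hv
    split_ifs
    · exact forceProb_nonneg hv
    · linarith [forceProb_le_one (G := G) hv]
  · rfl

theorem sum_stepMass (B : Finset V) : ∑ T ∈ Bᶜ.powerset, stepMass G B T = 1 := by
  rw [sum_congr rfl fun T hT => stepMass_eq (mem_powerset.1 hT), sum_powerset_bernoulli]

theorem stepMass_filter_forceProb_pos :
    0 < stepMass G B {v ∈ Bᶜ | 0 < forceProb G B v} := by
  rw [stepMass_eq (filter_subset _ _)]
  refine mul_pos (prod_pos fun v hv => (mem_filter.1 hv).2) (prod_pos fun v hv => ?_)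
  obtain ⟨hvB, hv⟩ := mem_sdiff.1 hv
  have : forceProb G B v = 0 :=
    le_antisymm (not_lt.1 fun h => hv (mem_filter.2 ⟨hvB, h⟩)) (forceProb_nonneg (mem_compl.1 hvB))
  simp [this]

variable (G) in
noncomputable def stepExpect (g : Finset V → ℝ) (B : Finset V) : ℝ :=
  ∑ T ∈ Bᶜ.powerset, stepMass G B T * g (B ∪ T)

theorem probAllBlue_succ (t : ℕ) :
    probAllBlue G (t + 1) = stepExpect G (probAllBlue G t) := rfl

theorem stepExpect_mono {g h : Finset V → ℝ} (hgh : ∀ C, B ⊆ C → g C ≤ h C) :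
    stepExpect G g B ≤ stepExpect G h B :=
  sum_le_sum fun T _ => mul_le_mul_of_nonneg_left (hgh _ subset_union_left) (stepMass_nonneg B T)

theorem stepExpect_const (c : ℝ) : stepExpect G (fun _ => c) B = c := by
  rw [stepExpect, ← sum_mul, sum_stepMass, one_mul]

theorem le_stepExpect {g : Finset V → ℝ} {c : ℝ} (h : ∀ C, B ⊆ C → c ≤ g C) :
    c ≤ stepExpect G g B :=
  (stepExpect_const (G := G) (B := B) c).symm.trans_le (stepExpect_mono h)

theorem stepExpect_le {g : Finset V → ℝ} {c : ℝ} (h : ∀ C, B ⊆ C → g C ≤ c) :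
    stepExpect G g B ≤ c :=
  (stepExpect_mono h).trans_eq (stepExpect_const c)

theorem stepExpect_add (g h : Finset V → ℝ) :
    stepExpect G (fun C => g C + h C) B = stepExpect G g B + stepExpect G h B := by
  simp only [stepExpect, mul_add, sum_add_distrib]

theorem stepExpect_const_mul (c : ℝ) (g : Finset V → ℝ) :
    stepExpect G (fun C => c * g C) B = c * stepExpect G g B := by
  simp only [stepExpect, mul_sum]
  exact sum_congr rfl fun _ _ => by ring

theorem stepExpect_const_sub (c : ℝ) (g : Finset V → ℝ) :
    stepExpect G (fun C => c - g C) B = c - stepExpect G g B := by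
  simp only [stepExpect, mul_sub, sum_sub_distrib, ← sum_mul, sum_stepMass, one_mul]

theorem stepExpect_sum {ι : Type*} (s : Finset ι) (g : ι → Finset V → ℝ) :
    stepExpect G (fun C => ∑ i ∈ s, g i C) B = ∑ i ∈ s, stepExpect G (g i) B := by
  simp only [stepExpect, mul_sum]; exact sum_comm

theorem stepExpect_univ (g : Finset V → ℝ) : stepExpect G g univ = g univ := by
  simp [stepExpect, stepMass]

theorem stepExpect_card :
    stepExpect G (fun C => (#C : ℝ)) B = #B + ∑ v ∈ Bᶜ, forceProb G B v := by
  have hcard : ∀ T ∈ Bᶜ.powerset, stepMass G B T * #(B ∪ T) =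
      #B * stepMass G B T + stepMass G B T * #T := fun T hT => by
    rw [card_union_of_disjoint (disjoint_right.2 fun v hv => mem_compl.1 (mem_powerset.1 hT hv))]
    push_cast; ring
  have hmean : ∑ T ∈ Bᶜ.powerset, stepMass G B T * #T = ∑ v ∈ Bᶜ, forceProb G B v := by
    rw [← sum_powerset_bernoulli_mul_card Bᶜ (forceProb G B)]
    exact sum_congr rfl fun T hT => by rw [stepMass_eq (mem_powerset.1 hT)]
  rw [stepExpect, sum_congr rfl hcard, sum_add_distrib, ← mul_sum, sum_stepMass, mul_one, hmean]

theorem logb_stepExpect {g : Finset V → ℝ} (hg : ∀ C, B ⊆ C → 0 < g C) :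
    stepExpect G (fun C => logb 2 (g C)) B ≤ logb 2 (stepExpect G g B) :=
  sum_mul_logb_le_logb_sum _ _ _ (fun T _ => stepMass_nonneg B T) (sum_stepMass B)
    fun _ _ => hg _ subset_union_left

theorem stepExpect_logLog_card_le (hB : B.Nonempty) :
    stepExpect G (fun C => logLog #C) B ≤ logLog #B + 1 := by
  have hk : (1 : ℝ) ≤ #B := by exact_mod_cast hB.card_pos
  have hlog : ∀ C, B ⊆ C → 1 ≤ logb 2 (2 * #C) := fun C hC =>
    one_le_logb_two (by
      have : (1 : ℝ) ≤ #C := by exact_mod_cast (hB.mono hC).card_pos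
      linarith)
  have hcard : stepExpect G (fun C => 2 * (#C : ℝ)) B ≤ (2 * #B) ^ 2 := by
    rw [stepExpect_const_mul, stepExpect_card]
    nlinarith [sum_forceProb_le_sq (G := G) B]
  have hcard₁ : 2 ≤ stepExpect G (fun C => 2 * (#C : ℝ)) B :=
    le_stepExpect fun C hC => by
      have : (1 : ℝ) ≤ #C := by exact_mod_cast (hB.mono hC).card_pos
      linarith
  calc stepExpect G (fun C => logLog #C) B
      ≤ logb 2 (stepExpect G (fun C => logb 2 (2 * #C)) B) :=
        logb_stepExpect fun C hC => one_pos.trans_le (hlog C hC)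
    _ ≤ logb 2 (logb 2 (stepExpect G (fun C => 2 * (#C : ℝ)) B)) := by
        refine logb_le_logb_of_le one_lt_two (one_pos.trans_le (le_stepExpect hlog)) ?_
        exact logb_stepExpect fun C hC => by
          have := (hB.mono hC).card_pos
          positivity
    _ ≤ logb 2 (logb 2 ((2 * #B) ^ 2)) := by
        refine logb_le_logb_of_le one_lt_two ?_ ?_
        · exact one_pos.trans_le (one_le_logb_two hcard₁)
        · exact logb_le_logb_of_le one_lt_two (by linarith) hcard
    _ = logLog #B + 1 := by
        have := one_le_logb_two (by linarith : (2 : ℝ) ≤ 2 * #B)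
        rw [logLog, logb_pow]
        push_cast
        rw [logb_mul two_ne_zero (by linarith), logb_self_eq_one one_lt_two]
        ring

theorem probAllBlue_zero_of_ne_univ (hB : B ≠ univ) : probAllBlue G 0 B = 0 :=
  if_neg hB

theorem probAllBlue_univ (t : ℕ) : probAllBlue G t (univ : Finset V) = 1 := by
  induction t with
  | zero => exact if_pos rfl
  | succ t ih => rw [probAllBlue_succ, stepExpect_univ, ih]

theorem probAllBlue_mem_Icc (t : ℕ) (B : Finset V) : probAllBlue G t B ∈ Set.Icc 0 1 := by
  induction t generalizing B with
  | zero => by_cases h : B = univ <;> simp [probAllBlue, h]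
  | succ t ih =>
    exact ⟨le_stepExpect fun C _ => (ih C).1, stepExpect_le fun C _ => (ih C).2⟩

theorem logLog_mul_probAllBlue_le (hB : B.Nonempty) (t : ℕ) :
    logLog (Fintype.card V) * probAllBlue G t B
      ≤ logLog #B + ∑ s ∈ range t, (1 - probAllBlue G s B) := by
  induction t generalizing B with
  | zero =>
    rcases eq_or_ne B univ with rfl | hBu
    · simp [probAllBlue_univ]
    · simpa [probAllBlue_zero_of_ne_univ hBu] using logLog_nonneg #B
  | succ t ih =>
    rcases eq_or_ne B univ with rfl | hBu
    · simp [probAllBlue_univ]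
    calc logLog (Fintype.card V) * probAllBlue G (t + 1) B
        = stepExpect G (fun C => logLog (Fintype.card V) * probAllBlue G t C) B := by
          rw [probAllBlue_succ, stepExpect_const_mul]
      _ ≤ stepExpect G (fun C => logLog #C + ∑ s ∈ range t, (1 - probAllBlue G s C)) B :=
          stepExpect_mono fun C hC => ih (hB.mono hC)
      _ = stepExpect G (fun C => logLog #C) B
            + ∑ s ∈ range t, (1 - probAllBlue G (s + 1) B) := by
          simp only [stepExpect_add, stepExpect_sum, stepExpect_const_sub, probAllBlue_succ]
      _ ≤ logLog #B + 1 + ∑ s ∈ range t, (1 - probAllBlue G (s + 1) B) := by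
          gcongr
          exact stepExpect_logLog_card_le hB
      _ = logLog #B + ∑ s ∈ range (t + 1), (1 - probAllBlue G s B) := by
          rw [sum_range_succ', probAllBlue_zero_of_ne_univ hBu]
          ring

/-- Connectivity gives a proper blue set a boundary vertex with a positive chance of being
forced, so with positive probability the number of white vertices drops. -/
theorem probAllBlue_pos (hG : G.Connected) (n : ℕ) (hB : B.Nonempty) (hn : #Bᶜ ≤ n) :
    0 < probAllBlue G n B := by
  induction n generalizing B with
  | zero =>
    rw [(compl_eq_empty_iff B).1 (card_eq_zero.1 (Nat.le_zero.1 hn)), probAllBlue_univ]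
    exact one_pos
  | succ n ih =>
    rcases eq_or_ne B univ with rfl | hBu
    · rw [probAllBlue_univ]; exact one_pos
    have ⟨b, hb⟩ := hB
    obtain ⟨w, hw⟩ : ∃ w, w ∉ B := by simpa [eq_univ_iff_forall] using hBu
    obtain ⟨u, hu, v, hv, huv⟩ := hG.exists_adj_mem_notMem (s := (B : Set V)) hb hw
    set T := {v ∈ Bᶜ | 0 < forceProb G B v}
    have hvT : v ∈ T := mem_filter.2 ⟨mem_compl.2 hv, forceProb_pos hu hv huv⟩
    have hcard : #(B ∪ T)ᶜ < #Bᶜ := card_lt_card <| (ssubset_iff_of_subset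
      (compl_subset_compl.2 subset_union_left)).2 ⟨v, mem_compl.2 hv, fun h =>
        mem_compl.1 h (mem_union_right B hvT)⟩
    calc 0 < stepMass G B T * probAllBlue G n (B ∪ T) :=
          mul_pos stepMass_filter_forceProb_pos (ih (hB.mono subset_union_left) (by omega))
      _ ≤ probAllBlue G (n + 1) B :=
          single_le_sum (f := fun T => stepMass G B T * probAllBlue G n (B ∪ T))
            (fun T _ => mul_nonneg (stepMass_nonneg B T) (probAllBlue_mem_Icc n _).1)
            (mem_powerset.2 (filter_subset _ _))

theorem exists_pos_le_probAllBlue (hG : G.Connected) :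
    ∃ δ > 0, ∀ B : Finset V, B.Nonempty → δ ≤ probAllBlue G (Fintype.card V) B := by
  obtain ⟨B₀, hB₀, hmin⟩ := exists_min_image ({B | B.Nonempty} : Finset (Finset V))
    (probAllBlue G (Fintype.card V))
    ⟨univ, mem_filter.2 ⟨mem_univ _, univ_nonempty_iff.2 hG.nonempty⟩⟩
  exact ⟨_, probAllBlue_pos hG _ (mem_filter.1 hB₀).2 (card_le_univ _),
    fun B hB => hmin B (mem_filter.2 ⟨mem_univ _, hB⟩)⟩

theorem one_sub_probAllBlue_add_le {N : ℕ} {δ : ℝ}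
    (hδ : ∀ B : Finset V, B.Nonempty → δ ≤ probAllBlue G N B) (t : ℕ) (hB : B.Nonempty) :
    1 - probAllBlue G (t + N) B ≤ (1 - δ) * (1 - probAllBlue G t B) := by
  induction t generalizing B with
  | zero =>
    rcases eq_or_ne B univ with rfl | hBu
    · simp [probAllBlue_univ]
    · rw [probAllBlue_zero_of_ne_univ hBu, zero_add]
      linarith [hδ B hB]
  | succ t ih =>
    rw [add_right_comm, probAllBlue_succ, probAllBlue_succ, ← stepExpect_const_sub,
      ← stepExpect_const_sub, ← stepExpect_const_mul]
    exact stepExpect_mono fun C hC => ih (hB.mono hC)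

theorem summable_one_sub_probAllBlue (hG : G.Connected) {S : Finset V} (hS : S.Nonempty) :
    Summable fun t => 1 - probAllBlue G t S := by
  obtain ⟨δ, hδ₀, hδ⟩ := exists_pos_le_probAllBlue hG
  have := hS.card_pos.trans_le (card_le_univ S)
  exact summable_of_add_le_mul this (fun t => sub_nonneg.2 (probAllBlue_mem_Icc t S).2)
    (by linarith [hδ S hS, (probAllBlue_mem_Icc (G := G) (Fintype.card V) S).2]) (by linarith)
    fun t => one_sub_probAllBlue_add_le hδ t hS

theorem logLog_card_sub_logLog_le_ept (hG : G.Connected) {S : Finset V} (hS : S.Nonempty) :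
    logLog (Fintype.card V) - logLog #S ≤ ept G S := by
  have hsum := summable_one_sub_probAllBlue hG hS
  have hbound (t : ℕ) : logLog (Fintype.card V) * probAllBlue G t S ≤ logLog #S + ept G S :=
    (logLog_mul_probAllBlue_le hS t).trans <| add_le_add_right
      (hsum.sum_le_tsum _ fun s _ => sub_nonneg.2 (probAllBlue_mem_Icc s S).2) _
  have hlim : Filter.Tendsto (fun t => logLog (Fintype.card V) * probAllBlue G t S)
      Filter.atTop (nhds (logLog (Fintype.card V))) := by
    simpa using (tendsto_const_nhds (x := (1 : ℝ)).sub hsum.tendsto_atTop_zero).const_mul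
      (logLog (Fintype.card V))
  linarith [le_of_tendsto' hlim hbound]

end ProbZeroForcing

open ProbZeroForcing in
/-- Lower bound on the probabilistic zero forcing throttling number
`th(G) = min over nonempty S of (|S| + ept(G,S))`:
for any connected graph `G` on `n` vertices, `th(G) ≥ log₂ log₂ (2n)`. -/
theorem throttling_lower_bound {V : Type*} [Fintype V] [DecidableEq V]
    (G : SimpleGraph V) [DecidableRel G.Adj] (hG : G.Connected) :
    Real.logb 2 (Real.logb 2 (2 * (Fintype.card V : ℝ))) ≤
      ⨅ S : {S : Finset V // S.Nonempty}, ((S.1.card : ℝ) + ept G S.1) := by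
  have : Nonempty V := hG.nonempty
  have : Nonempty {S : Finset V // S.Nonempty} := ⟨⟨univ, univ_nonempty⟩⟩
  refine le_ciInf fun ⟨S, hS⟩ => ?_
  have h₁ := logLog_card_sub_logLog_le_ept hG hS
  have h₂ := logLog_le_self hS.card_pos
  change logLog (Fintype.card V) ≤ _
  linarith
end
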